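/- Let J ∈ C^{m×n} with nullity n_0 = n − rank(J) > 0, and let R ∈ C^{n_0×n} be such that [J; R] has full column rank. Let A ∈ C^{m×n} be arbitrary, and form the (2m+n_0)×2n block matrix M = [[J, 0], [A, J], [0, R]]. Then the nullity of M satisfies 2n − rank(M) ≤ n_0. -/

import Mathlib

lemma rank_nullity_mat {m n : Type*} [Fintype m] [Fintype n]
    (M : Matrix m n ℂ) :
    M.rank + Module.finrank ℂ (LinearMap.ker M.mulVecLin) = Fintype.card n := by
  rw [Matrix.rank]
  simpa using LinearMap.finrank_range_add_finrank_ker M.mulVecLin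

/-- One step of deflation: let `J ∈ ℂ^{m×n}` with nullity `n₀ = n − rank J > 0`,
and let `R ∈ ℂ^{n₀×n}` be such that `[J; R]` has full column rank. Let
`A ∈ ℂ^{m×n}` be arbitrary and form the `(2m+n₀)×2n` block matrix
`M = [[J, 0], [A, J], [0, R]]`. Then the nullity of `M` satisfies
`2n − rank M ≤ n₀`. -/
theorem deflated_jacobian_nullity_le (m n n₀ : ℕ)
    (J A : Matrix (Fin m) (Fin n) ℂ) (R : Matrix (Fin n₀) (Fin n) ℂ)
    (hn₀ : n₀ = n - J.rank) (hpos : 0 < n₀)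
    (hfull : (Matrix.fromRows J R).rank = n) :
    2 * n - (Matrix.fromRows (Matrix.fromBlocks J 0 A J)
        (Matrix.fromCols 0 R)).rank ≤ n₀ := by
  set M := Matrix.fromRows (Matrix.fromBlocks J 0 A J) (Matrix.fromCols 0 R) with hM
  have hMrn : M.rank + Module.finrank ℂ (LinearMap.ker M.mulVecLin) = 2 * n := by
    have := rank_nullity_mat M
    simpa [two_mul] using this
  have hJrn : J.rank + Module.finrank ℂ (LinearMap.ker J.mulVecLin) = n := by
    simpa using rank_nullity_mat J
  have hKrn : (Matrix.fromRows J R).rank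
      + Module.finrank ℂ (LinearMap.ker (Matrix.fromRows J R).mulVecLin) = n := by
    simpa using rank_nullity_mat (Matrix.fromRows J R)
  have hKer : ∀ y : Fin n → ℂ, J.mulVec y = 0 → R.mulVec y = 0 → y = 0 := by
    intro y h1 h2
    have hK0 : Module.finrank ℂ (LinearMap.ker (Matrix.fromRows J R).mulVecLin) = 0 := by
      omega
    have hbot : LinearMap.ker (Matrix.fromRows J R).mulVecLin = ⊥ :=
      Submodule.finrank_eq_zero.mp hK0
    have : y ∈ LinearMap.ker (Matrix.fromRows J R).mulVecLin := by
      simp [Matrix.mulVecLin_apply, Matrix.fromRows_mulVec, h1, h2]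
    rw [hbot] at this
    simpa using this
  -- from M v = 0 we extract the three block equations
  have hblocks : ∀ v : (Fin n ⊕ Fin n) → ℂ, M.mulVec v = 0 →
      J.mulVec (v ∘ Sum.inl) = 0 ∧
      A.mulVec (v ∘ Sum.inl) + J.mulVec (v ∘ Sum.inr) = 0 ∧
      R.mulVec (v ∘ Sum.inr) = 0 := by
    intro v hv
    rw [hM, Matrix.fromRows_mulVec] at hv
    have htop := congrArg (fun w => w ∘ Sum.inl) hv
    have hbot := congrArg (fun w => w ∘ Sum.inr) hv
    simp only [Sum.elim_comp_inl, Sum.elim_comp_inr] at htop hbot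
    rw [Matrix.fromBlocks_mulVec] at htop
    have h1 := congrArg (fun w => w ∘ Sum.inl) htop
    have h2 := congrArg (fun w => w ∘ Sum.inr) htop
    simp only [Sum.elim_comp_inl, Sum.elim_comp_inr] at h1 h2
    have hveq : v = Sum.elim (v ∘ Sum.inl) (v ∘ Sum.inr) := by
      ext (i | i) <;> rfl
    rw [hveq, Matrix.fromCols_mulVec_sumElim] at hbot
    refine ⟨?_, ?_, ?_⟩
    · simpa [Matrix.zero_mulVec] using h1
    · simpa using h2
    · simpa [Matrix.zero_mulVec] using hbot
  let f : (LinearMap.ker M.mulVecLin) →ₗ[ℂ] (LinearMap.ker J.mulVecLin) :=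
    { toFun := fun v => ⟨v.1 ∘ Sum.inl, by
        have hv := v.2
        rw [LinearMap.mem_ker, Matrix.mulVecLin_apply] at hv
        exact LinearMap.mem_ker.mpr ((hblocks v.1 hv).1)⟩
      map_add' := fun a b => rfl
      map_smul' := fun c a => rfl }
  have hinj : Function.Injective f := by
    intro a b hab
    have hx : a.1 ∘ Sum.inl = b.1 ∘ Sum.inl :=
      congrArg Subtype.val hab
    set d : (Fin n ⊕ Fin n) → ℂ := a.1 - b.1 with hd
    have hdker : M.mulVec d = 0 := by
      have ha : M.mulVec a.1 = 0 := a.2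
      have hb : M.mulVec b.1 = 0 := b.2
      rw [hd, Matrix.mulVec_sub, ha, hb, sub_zero]
    obtain ⟨h1, h2, h3⟩ := hblocks d hdker
    have hdl : d ∘ Sum.inl = 0 := by
      ext i
      simp only [hd, Pi.sub_apply, Function.comp_apply, Pi.zero_apply, sub_eq_zero]
      exact congrFun hx i
    have hJy : J.mulVec (d ∘ Sum.inr) = 0 := by
      rw [hdl, Matrix.mulVec_zero] at h2
      simpa using h2
    have hdr := hKer (d ∘ Sum.inr) hJy h3
    have hd0 : d = 0 := by
      ext (i | i)
      · exact congrFun hdl i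
      · exact congrFun hdr i
    ext1
    rw [← sub_eq_zero]
    exact hd0
  have hle : Module.finrank ℂ (LinearMap.ker M.mulVecLin)
      ≤ Module.finrank ℂ (LinearMap.ker J.mulVecLin) :=
    LinearMap.finrank_le_finrank_of_injective hinj
  have hJle : J.rank ≤ n := by omega
  omega
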